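/- arXiv:1203.1336 — 2 statements merged into one kernel-verified Lean document; each statement's English description precedes it below -/
import Mathlib

section
/- Let n, ν be positive integers and let G be a finite simple graph with at most n vertices, matching number at most ν, and 2ν+2 ≤ n. If the independence number of G is strictly less than n − ν and (2ν+1 choose 2) < (n−ν)ν + (ν choose 2), then the number of edges of G is strictly less than (n−ν)ν + (ν choose 2). -/
/-- The number of edges of a simple graph. -/
noncomputable def edgeCount {V : Type*} (G : SimpleGraph V) : ℕ := G.edgeSet.ncard

/-- The independence number: largest size of a set of pairwise nonadjacent vertices. -/
noncomputable def indNum {V : Type*} (G : SimpleGraph V) : ℕ :=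
  sSup {n | ∃ s : Finset V, (∀ x ∈ s, ∀ y ∈ s, ¬ G.Adj x y) ∧ s.card = n}

/-- A finite set of edges of `G` forming a matching (pairwise vertex-disjoint edges). -/
def IsMatchingFinset {V : Type*} (G : SimpleGraph V) (m : Finset (Sym2 V)) : Prop :=
  ↑m ⊆ G.edgeSet ∧ ∀ e ∈ m, ∀ f ∈ m, e ≠ f → ∀ v : V, ¬(v ∈ e ∧ v ∈ f)

/-- The matching number: largest size of a matching. -/
noncomputable def matNum {V : Type*} (G : SimpleGraph V) : ℕ :=
  sSup {n | ∃ m : Finset (Sym2 V), IsMatchingFinset G m ∧ m.card = n}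

/-- The maximum degree. -/
noncomputable def maxDeg {V : Type*} (G : SimpleGraph V) : ℕ :=
  ⨆ v, (G.neighborSet v).ncard

/-- `Gext α ν`: disjoint union of `K_{2ν+1}` with `α - 1` isolated vertices. -/
def Gext (α ν : ℕ) : SimpleGraph (Fin (2*ν+1) ⊕ Fin (α-1)) :=
  SimpleGraph.fromRel (fun x y => x.isLeft = true ∧ y.isLeft = true)

/-- `Hext α ν`: the complete split graph: clique of size `ν` joined to an
independent set of size `α`. -/
def Hext (α ν : ℕ) : SimpleGraph (Fin ν ⊕ Fin α) :=
  SimpleGraph.fromRel (fun x _ => x.isLeft = true)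

/-- `Fext α Δ`: disjoint union of `α` copies of `K_{Δ+1}`. -/
def Fext (α Δ : ℕ) : SimpleGraph (Fin α × Fin (Δ+1)) :=
  SimpleGraph.fromRel (fun x y => x.1 = y.1)

/-- `Jgraph Δ`: for even `Δ` this is `K_{Δ+1}`; for odd `Δ = 2j-1` it is `K_{2j}`
minus a perfect matching (vertices `2k, 2k+1` are nonadjacent) together with an extra
vertex (the last one) joined to all but one (vertex `0`) of the other vertices. -/
def Jgraph (Δ : ℕ) : SimpleGraph (Fin (2*((Δ+1)/2)+1)) :=
  SimpleGraph.fromRel (fun x y =>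
    if Δ % 2 = 0 then True
    else (x.val < 2*((Δ+1)/2) ∧ y.val < 2*((Δ+1)/2) ∧ x.val/2 ≠ y.val/2) ∨
         (x.val = 2*((Δ+1)/2) ∧ 0 < y.val ∧ y.val < 2*((Δ+1)/2)))

/-- `G` is edge-extremal for `(α, ν)`: it has independence number `α`, matching number `ν`,
and the maximum number of edges among all finite simple graphs with independence number `α`
and matching number `ν`. -/
def EdgeExtremal {V : Type*} [Fintype V] (G : SimpleGraph V) (α ν : ℕ) : Prop :=
  indNum G = α ∧ matNum G = ν ∧
    ∀ (W : Type) [Fintype W] (H : SimpleGraph W),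
      indNum H = α → matNum H = ν → edgeCount H ≤ edgeCount G

/-!
Fix a maximum matching `M` and let `W` be its set of unmatched vertices. All exchange arguments rest
on one move: if `s(x, y) ∈ M` and `x` has a neighbour `u ∈ W`, replacing `s(x, y)` by `s(x, u)`
gives another maximum matching, in which `y` is unmatched. Hence there is no augmenting path of
length one, three or five. Call a matched vertex heavy if it has at least two neighbours in `W`.
Then the set `I` of unmatched vertices and partners of heavy vertices is independent, and the two
ends of a matching edge with no heavy end are never adjacent to two different vertices of `I`.

So, with `k` heavy vertices and `m ≤ ν` edges in `M`, every edge of `G` meets `U = Iᶜ`,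
`|U| + k ≤ 2m`, each heavy vertex has at most `|I|` neighbours in `I`, and each of the other
`m - k` matching edges sends at most `max (k + 1) 2` edges into `I`. Hence
`e(G) ≤ C(|U|, 2) + k |I| + (m - k) max (k + 1) 2`, and `|I| ≤ α(G) < n - ν` together with
`|U| + |I| ≤ n` turn this into the claimed bound by elementary arithmetic.
-/

open Finset

section

variable {V : Type*}

theorem Finset.card_add_card_le_max_of_forall_eq {α : Type*} {s t : Finset α} {c : ℕ}
    (hs : #s ≤ c) (ht : #t ≤ c) (h : ∀ a ∈ s, ∀ b ∈ t, a = b) : #s + #t ≤ max c 2 := by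
  rcases s.eq_empty_or_nonempty with rfl | ⟨a, ha⟩
  · simp only [card_empty]; omega
  rcases t.eq_empty_or_nonempty with rfl | ⟨b, hb⟩
  · simp only [card_empty]; omega
  have hs1 : #s ≤ 1 := card_le_one.2 fun x hx y hy => (h x hx b hb).trans (h y hy b hb).symm
  have ht1 : #t ≤ 1 := card_le_one.2 fun x hx y hy => (h a ha x hx).symm.trans (h a ha y hy)
  omega

theorem Finset.sum_le_card_filter_mul_add {α : Type*} (s : Finset α) (p : α → Prop)
    [DecidablePred p] (f : α → ℕ) {a b : ℕ} (ha : ∀ x ∈ s, p x → f x ≤ a)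
    (hb : ∀ x ∈ s, ¬ p x → f x ≤ b) :
    ∑ x ∈ s, f x ≤ #{x ∈ s | p x} * a + #{x ∈ s | ¬ p x} * b := by
  rw [← sum_filter_add_sum_filter_not s p]
  gcongr
  · simpa using sum_le_card_nsmul _ f a fun x hx => ha x (mem_filter.1 hx).1 (mem_filter.1 hx).2
  · simpa using sum_le_card_nsmul _ f b fun x hx => hb x (mem_filter.1 hx).1 (mem_filter.1 hx).2

theorem Finset.card_filter_mem_le_one [DecidableEq V] {s : Finset V} {z : Sym2 V} {b : V}
    (hbz : b ∈ z) (hbs : b ∉ s) : #{v ∈ s | v ∈ z} ≤ 1 := by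
  refine card_le_one.2 fun v hv v' hv' => ?_
  rw [mem_filter] at hv hv'
  have hvb : v ≠ b := fun h => hbs (h ▸ hv.1)
  rw [(Sym2.mem_and_mem_iff hvb.symm).1 ⟨hbz, hv.2⟩] at hv'
  rcases Sym2.mem_iff.1 hv'.2 with rfl | rfl
  exacts [absurd hv'.1 hbs, rfl]

theorem Finset.filter_mem_mk_subset [DecidableEq V] (s : Finset V) (x y : V) :
    {v ∈ s | v ∈ s(x, y)} ⊆ {x, y} :=
  fun v hv => by simpa using (mem_filter.1 hv).2

theorem SimpleGraph.card_edgeFinset_le_of_indep [Fintype V] [DecidableEq V] (G : SimpleGraph V)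
    [DecidableRel G.Adj] {I : Finset V} (hI : ∀ x ∈ I, ∀ y ∈ I, ¬ G.Adj x y) :
    #G.edgeFinset ≤ (#Iᶜ).choose 2 + ∑ u ∈ Iᶜ, #{v ∈ I | G.Adj u v} := by
  have hsub : G.edgeFinset ⊆ Iᶜ.offDiag.image (Function.uncurry Sym2.mk) ∪
      Iᶜ.biUnion fun u => {v ∈ I | G.Adj u v}.image fun v => s(u, v) := by
    intro e he
    induction e with
    | _ x y =>
      rw [mem_edgeFinset, mem_edgeSet] at he
      by_cases hx : x ∈ I
      · have hy : y ∉ I := fun hy => hI x hx y hy he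
        exact mem_union_right _ (mem_biUnion.2 ⟨y, mem_compl.2 hy,
          mem_image.2 ⟨x, mem_filter.2 ⟨hx, he.symm⟩, Sym2.eq_swap⟩⟩)
      by_cases hy : y ∈ I
      · exact mem_union_right _ (mem_biUnion.2 ⟨x, mem_compl.2 hx,
          mem_image.2 ⟨y, mem_filter.2 ⟨hy, he⟩, rfl⟩⟩)
      · exact mem_union_left _ (mem_image.2
          ⟨(x, y), mem_offDiag.2 ⟨mem_compl.2 hx, mem_compl.2 hy, he.ne⟩, rfl⟩)
  calc #G.edgeFinset ≤ _ := card_le_card hsub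
    _ ≤ _ := card_union_le _ _
    _ ≤ (#Iᶜ).choose 2 + ∑ u ∈ Iᶜ, #{v ∈ I | G.Adj u v} := by
      rw [Sym2.card_image_offDiag]
      gcongr
      exact card_biUnion_le.trans (sum_le_sum fun u _ => card_image_le)

section Matching

variable {G : SimpleGraph V} {M : Finset (Sym2 V)}

theorem IsMatchingFinset.mono {M' : Finset (Sym2 V)} (hM : IsMatchingFinset G M) (h : M' ⊆ M) :
    IsMatchingFinset G M' :=
  ⟨(coe_subset.2 h).trans hM.1, fun e he f hf => hM.2 e (h he) f (h hf)⟩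

theorem IsMatchingFinset.eq_of_mem (hM : IsMatchingFinset G M) {e f : Sym2 V} {v : V}
    (he : e ∈ M) (hf : f ∈ M) (hve : v ∈ e) (hvf : v ∈ f) : e = f :=
  by_contra fun hne => hM.2 e he f hf hne v ⟨hve, hvf⟩

theorem IsMatchingFinset.insert_edge [DecidableEq V] {u v : V} (hM : IsMatchingFinset G M)
    (huv : G.Adj u v) (hu : ∀ e ∈ M, u ∉ e) (hv : ∀ e ∈ M, v ∉ e) :
    IsMatchingFinset G (insert s(u, v) M) := by
  have hfree : ∀ f ∈ M, ∀ z ∈ s(u, v), z ∉ f := by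
    intro f hf z hz
    rcases Sym2.mem_iff.1 hz with rfl | rfl
    exacts [hu f hf, hv f hf]
  refine ⟨by simpa [Set.insert_subset_iff] using ⟨huv, hM.1⟩, ?_⟩
  intro e he f hf hef z ⟨hze, hzf⟩
  rcases mem_insert.1 he with rfl | he <;> rcases mem_insert.1 hf with rfl | hf
  · exact hef rfl
  · exact hfree f hf z hze hzf
  · exact hfree e he z hzf hze
  · exact hM.2 e he f hf hef z ⟨hze, hzf⟩

variable [Fintype V]

theorem card_le_matNum (hM : IsMatchingFinset G M) : #M ≤ matNum G := by
  classical
  exact le_csSup ⟨Fintype.card (Sym2 V), by rintro _ ⟨m, -, rfl⟩; exact card_le_univ m⟩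
    ⟨M, hM, rfl⟩

theorem exists_isMatchingFinset_card_eq_matNum (G : SimpleGraph V) :
    ∃ M : Finset (Sym2 V), IsMatchingFinset G M ∧ #M = matNum G := by
  classical
  exact Nat.sSup_mem (s := {n | ∃ m, IsMatchingFinset G m ∧ #m = n})
    ⟨0, ∅, ⟨by simp, by simp⟩, rfl⟩
    ⟨Fintype.card (Sym2 V), by rintro _ ⟨m, -, rfl⟩; exact card_le_univ m⟩

theorem card_le_indNum {s : Finset V} (hs : ∀ x ∈ s, ∀ y ∈ s, ¬ G.Adj x y) :
    #s ≤ indNum G :=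
  le_csSup ⟨Fintype.card V, by rintro _ ⟨t, -, rfl⟩; exact card_le_univ t⟩ ⟨s, hs, rfl⟩

theorem edgeCount_eq_card_edgeFinset [DecidableRel G.Adj] : edgeCount G = #G.edgeFinset := by
  rw [edgeCount, ← SimpleGraph.coe_edgeFinset, Set.ncard_coe_finset]

variable [DecidableEq V]

def unmatchedVerts (M : Finset (Sym2 V)) : Finset V := {v | ∀ e ∈ M, v ∉ e}

@[simp]
theorem mem_unmatchedVerts {v : V} : v ∈ unmatchedVerts M ↔ ∀ e ∈ M, v ∉ e := by
  simp [unmatchedVerts]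

theorem IsMatchingFinset.exists_switch {x y u : V} (hM : IsMatchingFinset G M)
    (hxy : s(x, y) ∈ M) (hu : u ∈ unmatchedVerts M) (hxu : G.Adj x u) :
    ∃ M', IsMatchingFinset G M' ∧ #M' = #M ∧ M.erase s(x, y) ⊆ M' ∧
      y ∈ unmatchedVerts M' ∧ (unmatchedVerts M).erase u ⊆ unmatchedVerts M' := by
  rw [mem_unmatchedVerts] at hu
  have hx : ∀ e ∈ M.erase s(x, y), x ∉ e := fun e he hxe =>
    (ne_of_mem_erase he) (hM.eq_of_mem (mem_of_mem_erase he) hxy hxe (Sym2.mem_mk_left x y))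
  have hnew : s(x, u) ∉ M.erase s(x, y) := fun h =>
    hu _ (mem_of_mem_erase h) (Sym2.mem_mk_right x u)
  refine ⟨insert s(x, u) (M.erase s(x, y)),
    (hM.mono (erase_subset _ _)).insert_edge hxu hx (fun e he => hu e (mem_of_mem_erase he)),
    by rw [card_insert_of_notMem hnew, card_erase_add_one hxy], subset_insert _ _, ?_, ?_⟩
  · rw [mem_unmatchedVerts]
    intro e he hye
    rcases mem_insert.1 he with rfl | he
    · rcases Sym2.mem_iff.1 hye with rfl | rfl
      · exact G.irrefl (hM.1 hxy)
      · exact hu _ hxy (Sym2.mem_mk_right x y)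
    · exact (ne_of_mem_erase he) (hM.eq_of_mem (mem_of_mem_erase he) hxy hye
        (Sym2.mem_mk_right x y))
  · intro z hz
    obtain ⟨hzu, hz⟩ := mem_erase.1 hz
    rw [mem_unmatchedVerts] at hz ⊢
    intro e he hze
    rcases mem_insert.1 he with rfl | he
    · rcases Sym2.mem_iff.1 hze with rfl | rfl
      · exact hz _ hxy (Sym2.mem_mk_left z y)
      · exact hzu rfl
    · exact hz e (mem_of_mem_erase he) hze

end Matching

section MaximumMatching

variable [Fintype V] [DecidableEq V] {G : SimpleGraph V} {M : Finset (Sym2 V)}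

theorem not_adj_of_mem_unmatchedVerts (hM : IsMatchingFinset G M) (hmax : #M = matNum G)
    {u v : V} (hu : u ∈ unmatchedVerts M) (hv : v ∈ unmatchedVerts M) : ¬ G.Adj u v := by
  intro huv
  rw [mem_unmatchedVerts] at hu hv
  have hnew : s(u, v) ∉ M := fun h => hu _ h (Sym2.mem_mk_left u v)
  have := card_le_matNum (hM.insert_edge huv hu hv)
  rw [card_insert_of_notMem hnew] at this
  omega

theorem eq_of_adj_of_adj (hM : IsMatchingFinset G M) (hmax : #M = matNum G) {x y u v : V}
    (hxy : s(x, y) ∈ M) (hu : u ∈ unmatchedVerts M) (hv : v ∈ unmatchedVerts M)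
    (hxu : G.Adj x u) (hyv : G.Adj y v) : u = v := by
  by_contra huv
  obtain ⟨M', hM', hcard, -, hy, hsub⟩ := hM.exists_switch hxy hu hxu
  exact not_adj_of_mem_unmatchedVerts hM' (hcard.trans hmax) hy
    (hsub (mem_erase.2 ⟨Ne.symm huv, hv⟩)) hyv

theorem eq_of_adj_of_adj_of_adj (hM : IsMatchingFinset G M) (hmax : #M = matNum G)
    {x y a b u w : V} (hxy : s(x, y) ∈ M) (hab : s(a, b) ∈ M) (hne : s(x, y) ≠ s(a, b))
    (hu : u ∈ unmatchedVerts M) (hw : w ∈ unmatchedVerts M) (hwu : w ≠ u) (haw : G.Adj a w)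
    (hxu : G.Adj x u) (hyb : G.Adj y b) : u = b := by
  obtain ⟨M', hM', hcard, hsub, hb, hsub'⟩ := hM.exists_switch hab hw haw
  exact eq_of_adj_of_adj hM' (hcard.trans hmax) (hsub (mem_erase.2 ⟨hne, hxy⟩))
    (hsub' (mem_erase.2 ⟨Ne.symm hwu, hu⟩)) hb hxu hyb

variable [DecidableRel G.Adj]

def unmatchedNbrs (G : SimpleGraph V) [DecidableRel G.Adj] (M : Finset (Sym2 V)) (a : V) :
    Finset V :=
  {u ∈ unmatchedVerts M | G.Adj a u}

def heavyPartners (G : SimpleGraph V) [DecidableRel G.Adj] (M : Finset (Sym2 V)) : Finset V :=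
  {b | ∃ a, s(a, b) ∈ M ∧ 2 ≤ #(unmatchedNbrs G M a)}

/-- Each of these vertices is missed by some maximum matching: switching the matching edge of a
heavy partner to an unmatched neighbour of its heavy end leaves the partner unmatched. -/
def missableVerts (G : SimpleGraph V) [DecidableRel G.Adj] (M : Finset (Sym2 V)) : Finset V :=
  unmatchedVerts M ∪ heavyPartners G M

theorem mem_unmatchedNbrs {a u : V} :
    u ∈ unmatchedNbrs G M a ↔ u ∈ unmatchedVerts M ∧ G.Adj a u :=
  mem_filter

theorem mem_heavyPartners {b : V} :
    b ∈ heavyPartners G M ↔ ∃ a, s(a, b) ∈ M ∧ 2 ≤ #(unmatchedNbrs G M a) := by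
  simp [heavyPartners]

theorem unmatchedNbrs_eq_empty_of_heavy (hM : IsMatchingFinset G M) (hmax : #M = matNum G)
    {a b : V} (hab : s(a, b) ∈ M) (ha : 2 ≤ #(unmatchedNbrs G M a)) :
    unmatchedNbrs G M b = ∅ := by
  refine eq_empty_of_forall_notMem fun v hv => ?_
  obtain ⟨u, hu, huv⟩ := exists_mem_ne ha v
  rw [mem_unmatchedNbrs] at hu hv
  exact huv (eq_of_adj_of_adj hM hmax hab hu.1 hv.1 hu.2 hv.2)

theorem notMem_heavyPartners_of_heavy (hM : IsMatchingFinset G M) (hmax : #M = matNum G)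
    {a : V} (ha : 2 ≤ #(unmatchedNbrs G M a)) : a ∉ heavyPartners G M := by
  intro h
  obtain ⟨a', ha'a, ha'⟩ := mem_heavyPartners.1 h
  rw [unmatchedNbrs_eq_empty_of_heavy hM hmax ha'a ha'] at ha
  simp at ha

theorem notMem_unmatchedVerts_of_mem_heavyPartners {b : V} (hb : b ∈ heavyPartners G M) :
    b ∉ unmatchedVerts M := by
  obtain ⟨a, hab, -⟩ := mem_heavyPartners.1 hb
  exact fun h => mem_unmatchedVerts.1 h _ hab (Sym2.mem_mk_right a b)

theorem mk_ne_of_mem_heavyPartners {x y a b : V} (hx : x ∉ heavyPartners G M)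
    (hy : y ∉ heavyPartners G M) (hb : b ∈ heavyPartners G M) : s(x, y) ≠ s(a, b) := by
  intro h
  rcases Sym2.mem_iff.1 (h ▸ Sym2.mem_mk_right a b : b ∈ s(x, y)) with rfl | rfl
  exacts [hx hb, hy hb]

theorem missableVerts_indep (hM : IsMatchingFinset G M) (hmax : #M = matNum G) :
    ∀ x ∈ missableVerts G M, ∀ y ∈ missableVerts G M, ¬ G.Adj x y := by
  have hWB : ∀ u ∈ unmatchedVerts M, ∀ b ∈ heavyPartners G M, ¬ G.Adj u b := by
    intro u hu b hb hub
    obtain ⟨a, hab, ha⟩ := mem_heavyPartners.1 hb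
    have := mem_unmatchedNbrs.2 ⟨hu, hub.symm⟩
    simp [unmatchedNbrs_eq_empty_of_heavy hM hmax hab ha] at this
  intro x hx y hy hxy
  rcases mem_union.1 hx with hx | hx <;> rcases mem_union.1 hy with hy | hy
  · exact not_adj_of_mem_unmatchedVerts hM hmax hx hy hxy
  · exact hWB x hx y hy hxy
  · exact hWB y hy x hx hxy.symm
  · obtain ⟨a, hax, ha⟩ := mem_heavyPartners.1 hx
    obtain ⟨a', hay, ha'⟩ := mem_heavyPartners.1 hy
    obtain ⟨u, hu, -⟩ := exists_mem_ne ha' x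
    obtain ⟨w, hw, hwu⟩ := exists_mem_ne ha u
    rw [mem_unmatchedNbrs] at hu hw
    have hne : s(a', y) ≠ s(a, x) := by
      intro h
      rcases Sym2.mem_iff.1 (h ▸ Sym2.mem_mk_right a' y : y ∈ s(a, x)) with rfl | rfl
      · exact notMem_heavyPartners_of_heavy hM hmax ha hy
      · exact G.irrefl hxy
    have hux := eq_of_adj_of_adj_of_adj hM hmax hay hax hne hu.1 hw.1 hwu hw.2 hu.2
      hxy.symm
    exact notMem_unmatchedVerts_of_mem_heavyPartners hx (hux ▸ hu.1)

theorem eq_of_adj_unmatched_of_adj_missable (hM : IsMatchingFinset G M)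
    (hmax : #M = matNum G) {x y u v : V} (hxy : s(x, y) ∈ M) (hx : x ∉ heavyPartners G M)
    (hy : y ∉ heavyPartners G M) (hu : u ∈ unmatchedVerts M) (hv : v ∈ missableVerts G M)
    (hxu : G.Adj x u) (hyv : G.Adj y v) : u = v := by
  rcases mem_union.1 hv with hv | hv
  · exact eq_of_adj_of_adj hM hmax hxy hu hv hxu hyv
  · obtain ⟨a, hav, ha⟩ := mem_heavyPartners.1 hv
    obtain ⟨w, hw, hwu⟩ := exists_mem_ne ha u
    rw [mem_unmatchedNbrs] at hw
    exact eq_of_adj_of_adj_of_adj hM hmax hxy hav (mk_ne_of_mem_heavyPartners hx hy hv)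
      hu hw.1 hwu hw.2 hxu hyv

theorem eq_of_adj_of_adj_missable (hM : IsMatchingFinset G M) (hmax : #M = matNum G)
    {x y u v : V} (hxy : s(x, y) ∈ M) (hx : x ∉ heavyPartners G M)
    (hy : y ∉ heavyPartners G M) (hu : u ∈ missableVerts G M) (hv : v ∈ missableVerts G M)
    (hxu : G.Adj x u) (hyv : G.Adj y v) : u = v := by
  rcases mem_union.1 hu with hu' | hu'
  · exact eq_of_adj_unmatched_of_adj_missable hM hmax hxy hx hy hu' hv hxu hyv
  rcases mem_union.1 hv with hv' | hv'
  · exact (eq_of_adj_unmatched_of_adj_missable hM hmax (Sym2.eq_swap ▸ hxy) hy hx hv' hu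
      hyv hxu).symm
  by_contra huv
  -- After switching `s(a, u)` to `s(a, w)`, the vertex `u` is unmatched and
  -- `eq_of_adj_of_adj_of_adj` applies to the new matching.
  obtain ⟨a, hau, ha⟩ := mem_heavyPartners.1 hu'
  obtain ⟨a', hav, ha'⟩ := mem_heavyPartners.1 hv'
  obtain ⟨w, hw, -⟩ := exists_mem_ne ha u
  obtain ⟨w', hw', hw'w⟩ := exists_mem_ne ha' w
  rw [mem_unmatchedNbrs] at hw hw'
  obtain ⟨M', hM', hcard, hsub, huM', hsub'⟩ := hM.exists_switch hau hw.1 hw.2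
  have hav_ne : s(a', v) ≠ s(a, u) := by
    intro h
    rcases Sym2.mem_iff.1 (h ▸ Sym2.mem_mk_right a' v : v ∈ s(a, u)) with rfl | rfl
    exacts [notMem_heavyPartners_of_heavy hM hmax ha hv', huv rfl]
  have hw'u : w' ≠ u := fun h => notMem_unmatchedVerts_of_mem_heavyPartners hu' (h ▸ hw'.1)
  exact huv (eq_of_adj_of_adj_of_adj hM' (hcard.trans hmax)
    (hsub (mem_erase.2 ⟨mk_ne_of_mem_heavyPartners hx hy hu', hxy⟩))
    (hsub (mem_erase.2 ⟨hav_ne, hav⟩)) (mk_ne_of_mem_heavyPartners hx hy hv') huM'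
    (hsub' (mem_erase.2 ⟨hw'w, hw'.1⟩)) hw'u hw'.2 hxu hyv)

end MaximumMatching

section Counting

variable [Fintype V] [DecidableEq V] {G : SimpleGraph V} {M : Finset (Sym2 V)}

theorem IsMatchingFinset.sum_eq_sum_sum_filter_mem (hM : IsMatchingFinset G M) {s : Finset V}
    (hs : ∀ v ∈ s, v ∉ unmatchedVerts M) (f : V → ℕ) :
    ∑ v ∈ s, f v = ∑ e ∈ M, ∑ v ∈ s with v ∈ e, f v := by
  have hs' : s = M.biUnion fun e => {v ∈ s | v ∈ e} := by
    ext v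
    simp only [mem_biUnion, mem_filter]
    refine ⟨fun hv => ?_, fun ⟨_, _, hv, _⟩ => hv⟩
    obtain ⟨e, he, hve⟩ : ∃ e ∈ M, v ∈ e := by simpa using hs v hv
    exact ⟨e, he, hv, hve⟩
  nth_rewrite 1 [hs']
  refine sum_biUnion fun e he f hf hef => disjoint_left.2 fun v hve hvf => ?_
  exact hM.2 e he f hf hef v ⟨(mem_filter.1 hve).2, (mem_filter.1 hvf).2⟩

variable [DecidableRel G.Adj]

theorem card_filter_exists_mem_heavyPartners (hM : IsMatchingFinset G M)
    (hmax : #M = matNum G) :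
    #{e ∈ M | ∃ b ∈ heavyPartners G M, b ∈ e} = #(heavyPartners G M) := by
  apply le_antisymm
  · refine card_le_card_of_forall_subsingleton (fun e b => b ∈ e)
      (fun e he => (mem_filter.1 he).2) fun b _ e he f hf => ?_
    exact hM.eq_of_mem (mem_filter.1 he.1).1 (mem_filter.1 hf.1).1 he.2 hf.2
  · refine card_le_card_of_forall_subsingleton' (fun e b => b ∈ e) (fun b hb => ?_)
      fun e he b hb b' hb' => ?_
    · obtain ⟨a, hab, -⟩ := mem_heavyPartners.1 hb
      exact ⟨s(a, b), mem_filter.2 ⟨hab, b, hb, Sym2.mem_mk_right a b⟩, Sym2.mem_mk_right a b⟩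
    · by_contra hne
      obtain ⟨a, hab, ha⟩ := mem_heavyPartners.1 hb.1
      have hae : s(a, b) = s(b, b') := (hM.eq_of_mem hab (mem_filter.1 he).1
        (Sym2.mem_mk_right a b) hb.2).trans ((Sym2.mem_and_mem_iff hne).1 ⟨hb.2, hb'.2⟩)
      rcases Sym2.mem_iff.1 (hae ▸ Sym2.mem_mk_left a b : a ∈ s(b, b')) with rfl | rfl
      · exact G.irrefl (hM.1 hab)
      · exact notMem_heavyPartners_of_heavy hM hmax ha hb'.1

theorem notMem_unmatchedVerts_of_mem_compl {v : V} (hv : v ∈ (missableVerts G M)ᶜ) :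
    v ∉ unmatchedVerts M :=
  fun h => mem_compl.1 hv (mem_union_left _ h)

theorem card_missableNbrs_le {x y : V} (hxy : s(x, y) ∈ M) (hy : y ∉ heavyPartners G M) :
    #{u ∈ missableVerts G M | G.Adj x u} ≤ #(heavyPartners G M) + 1 := by
  have hx : #(unmatchedNbrs G M x) ≤ 1 := by
    by_contra h
    exact hy (mem_heavyPartners.2 ⟨x, hxy, by omega⟩)
  calc #{u ∈ missableVerts G M | G.Adj x u}
      ≤ #(unmatchedNbrs G M x ∪ heavyPartners G M) := by
        refine card_le_card fun u hu => ?_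
        obtain ⟨hu, hxu⟩ := mem_filter.1 hu
        rcases mem_union.1 hu with hu | hu
        · exact mem_union_left _ (mem_unmatchedNbrs.2 ⟨hu, hxu⟩)
        · exact mem_union_right _ hu
    _ ≤ #(unmatchedNbrs G M x) + #(heavyPartners G M) := card_union_le _ _
    _ ≤ #(heavyPartners G M) + 1 := by omega

theorem card_heavyPartners_le (hM : IsMatchingFinset G M) (hmax : #M = matNum G) :
    #(heavyPartners G M) ≤ #M :=
  card_filter_exists_mem_heavyPartners hM hmax ▸ card_filter_le _ _

theorem sum_card_missableNbrs_le_of_light (hM : IsMatchingFinset G M) (hmax : #M = matNum G)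
    {x y : V} (hxy : s(x, y) ∈ M) (hx : x ∉ heavyPartners G M) (hy : y ∉ heavyPartners G M) :
    ∑ v ∈ (missableVerts G M)ᶜ with v ∈ s(x, y), #{u ∈ missableVerts G M | G.Adj v u} ≤
      max (#(heavyPartners G M) + 1) 2 := by
  calc _ ≤ ∑ v ∈ {x, y}, #{u ∈ missableVerts G M | G.Adj v u} :=
        sum_le_sum_of_subset (filter_mem_mk_subset _ x y)
    _ = #{u ∈ missableVerts G M | G.Adj x u} + #{u ∈ missableVerts G M | G.Adj y u} :=
        sum_pair (G.ne_of_adj (hM.1 hxy))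
    _ ≤ _ := card_add_card_le_max_of_forall_eq (card_missableNbrs_le hxy hy)
        (card_missableNbrs_le (Sym2.eq_swap ▸ hxy) hx) fun u hu v hv =>
          eq_of_adj_of_adj_missable hM hmax hxy hx hy (mem_filter.1 hu).1 (mem_filter.1 hv).1
            (mem_filter.1 hu).2 (mem_filter.1 hv).2

theorem card_compl_missableVerts_add_card_heavyPartners_le (hM : IsMatchingFinset G M)
    (hmax : #M = matNum G) : #(missableVerts G M)ᶜ + #(heavyPartners G M) ≤ 2 * #M := by
  have hcard : #(missableVerts G M)ᶜ = ∑ e ∈ M, #{v ∈ (missableVerts G M)ᶜ | v ∈ e} := by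
    simpa using hM.sum_eq_sum_sum_filter_mem (fun v => notMem_unmatchedVerts_of_mem_compl)
      fun _ => 1
  have hsplit := sum_le_card_filter_mul_add M (fun e => ∃ b ∈ heavyPartners G M, b ∈ e)
    (fun e => #{v ∈ (missableVerts G M)ᶜ | v ∈ e}) (a := 1) (b := 2)
    (fun e _ ⟨b, hb, hbe⟩ => card_filter_mem_le_one hbe
      fun h => mem_compl.1 h (mem_union_right _ hb))
    fun e _ _ => by
      induction e with
      | _ x y => exact (card_le_card (filter_mem_mk_subset _ x y)).trans card_le_two
  have hA := card_filter_exists_mem_heavyPartners hM hmax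
  have hAM := card_filter_add_card_filter_not (s := M)
    (p := fun e => ∃ b ∈ heavyPartners G M, b ∈ e)
  omega

theorem sum_card_missableNbrs_le (hM : IsMatchingFinset G M) (hmax : #M = matNum G) :
    ∑ v ∈ (missableVerts G M)ᶜ, #{u ∈ missableVerts G M | G.Adj v u} ≤
      #(heavyPartners G M) * #(missableVerts G M) +
        (#M - #(heavyPartners G M)) * max (#(heavyPartners G M) + 1) 2 := by
  rw [hM.sum_eq_sum_sum_filter_mem (fun v => notMem_unmatchedVerts_of_mem_compl)]
  refine (sum_le_card_filter_mul_add M (fun e => ∃ b ∈ heavyPartners G M, b ∈ e) _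
    (a := #(missableVerts G M)) (b := max (#(heavyPartners G M) + 1) 2)
    (fun e _ ⟨b, hb, hbe⟩ => ?_) fun e he hp => ?_).trans ?_
  · calc _ ≤ #{v ∈ (missableVerts G M)ᶜ | v ∈ e} • #(missableVerts G M) :=
          sum_le_card_nsmul _ _ _ fun v _ => card_filter_le _ _
      _ ≤ 1 • #(missableVerts G M) := by
          gcongr
          exact card_filter_mem_le_one hbe fun h => mem_compl.1 h (mem_union_right _ hb)
      _ = #(missableVerts G M) := one_smul _ _
  · induction e with
    | _ x y =>
      exact sum_card_missableNbrs_le_of_light hM hmax he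
        (fun hx => hp ⟨x, hx, Sym2.mem_mk_left x y⟩) fun hy => hp ⟨y, hy, Sym2.mem_mk_right x y⟩
  · have hA := card_filter_exists_mem_heavyPartners hM hmax
    have hAM := card_filter_add_card_filter_not (s := M)
      (p := fun e => ∃ b ∈ heavyPartners G M, b ∈ e)
    rw [hA, show #{e ∈ M | ¬ ∃ b ∈ heavyPartners G M, b ∈ e} = #M - #(heavyPartners G M) by
      omega]

end Counting

theorem choose_two_add_mul_add_mul_lt {n ν m k u i : ℕ} (hm : m ≤ ν) (hkm : k ≤ m)
    (hu : u + k ≤ 2 * m) (hn : u + i ≤ n) (hi : i < n - ν)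
    (hlt : (2 * ν + 1).choose 2 < (n - ν) * ν + ν.choose 2) :
    u.choose 2 + k * i + (m - k) * max (k + 1) 2 < (n - ν) * ν + ν.choose 2 := by
  rcases Nat.eq_zero_or_pos k with rfl | hk
  · calc u.choose 2 + 0 * i + (m - 0) * max (0 + 1) 2 = u.choose 2 + 2 * m := by
          simp [mul_comm]
      _ ≤ (2 * m).choose 2 + 2 * m := by gcongr; omega
      _ = (2 * m + 1).choose 2 := by rw [Nat.choose_succ_succ', Nat.choose_one_right, add_comm]
      _ ≤ (2 * ν + 1).choose 2 := Nat.choose_le_choose 2 (by omega)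
      _ < _ := hlt
  obtain ⟨p, rfl⟩ : ∃ p, n = p + ν := ⟨n - ν, by omega⟩
  rw [max_eq_left (by omega), Nat.add_sub_cancel] at *
  have hν : 1 ≤ ν := by omega
  rw [← Nat.cast_lt (α := ℚ)] at hlt ⊢
  push_cast [Nat.cast_sub hkm, Nat.cast_choose_two] at hlt ⊢
  have hi' : (i : ℚ) + 1 ≤ p := by exact_mod_cast hi
  have hn' : (u : ℚ) + i ≤ p + ν := by exact_mod_cast hn
  have hu' : (u : ℚ) + k ≤ 2 * m := by exact_mod_cast hu
  have hm' : (m : ℚ) ≤ ν := by exact_mod_cast hm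
  have hkm' : (k : ℚ) ≤ m := by exact_mod_cast hkm
  have hk' : (1 : ℚ) ≤ k := by exact_mod_cast hk
  have hν' : (1 : ℚ) ≤ ν := by exact_mod_cast hν
  have hp : 3 * (ν : ℚ) + 3 < 2 * p := by
    by_contra h
    nlinarith [mul_le_mul_of_nonneg_left (not_lt.1 h) (by linarith : (0 : ℚ) ≤ ν)]
  -- `hlt` forces `2p > 3ν + 3`, which pays for the excess of `C(u, 2)` over `C(ν, 2)` if `u > ν`.
  rcases le_total (u : ℚ) ν with h | h
  · nlinarith [mul_nonneg (by linarith : (0 : ℚ) ≤ ν - m) (by linarith : (0 : ℚ) ≤ k + 1),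
      mul_nonneg (by linarith : (0 : ℚ) ≤ ν - k) (by linarith : (0 : ℚ) ≤ p - k - 1),
      mul_nonneg (by linarith : (0 : ℚ) ≤ k) (by linarith : (0 : ℚ) ≤ p - 1 - i),
      mul_nonneg (by linarith : (0 : ℚ) ≤ ν - u) (by linarith : (0 : ℚ) ≤ ν + u - 1)]
  · nlinarith [mul_nonneg (by linarith : (0 : ℚ) ≤ ν - m) (by linarith : (0 : ℚ) ≤ k + 1),
      mul_nonneg (by linarith : (0 : ℚ) ≤ ν - k - (u - ν)) (by linarith : (0 : ℚ) ≤ p - k - 1),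
      mul_nonneg (by linarith : (0 : ℚ) ≤ k) (by linarith : (0 : ℚ) ≤ p + ν - i - u),
      mul_nonneg (by linarith : (0 : ℚ) ≤ u - ν) (by linarith : (0 : ℚ) ≤ 2 * p - 3 * ν)]

end

theorem edges_lt_of_indepNum_lt_general (n ν : ℕ)
    {V : Type*} [Fintype V] (G : SimpleGraph V)
    (hcard : Fintype.card V ≤ n) (hmat : matNum G ≤ ν)
    (hind : indNum G < n - ν)
    (hlt : (2 * ν + 1).choose 2 < (n - ν) * ν + ν.choose 2) :
    edgeCount G < (n - ν) * ν + ν.choose 2 := by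
  classical
  obtain ⟨M, hM, hmax⟩ := exists_isMatchingFinset_card_eq_matNum G
  set I := missableVerts G M
  set B := heavyPartners G M
  have hIndep := missableVerts_indep hM hmax
  have hUB : #Iᶜ + #B ≤ 2 * #M := card_compl_missableVerts_add_card_heavyPartners_le hM hmax
  have hIU : #Iᶜ + #I ≤ n := (card_compl_add_card I).trans_le hcard
  calc edgeCount G = #G.edgeFinset := edgeCount_eq_card_edgeFinset
    _ ≤ (#Iᶜ).choose 2 + ∑ v ∈ Iᶜ, #{u ∈ I | G.Adj v u} :=
        G.card_edgeFinset_le_of_indep hIndep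
    _ ≤ (#Iᶜ).choose 2 + (#B * #I + (#M - #B) * max (#B + 1) 2) := by
        gcongr
        exact sum_card_missableNbrs_le hM hmax
    _ < (n - ν) * ν + ν.choose 2 := by
        rw [← add_assoc]
        exact choose_two_add_mul_add_mul_lt (hmax ▸ hmat) (card_heavyPartners_le hM hmax) hUB hIU
          ((card_le_indNum hIndep).trans_lt hind) hlt

/-- Erdős–Gallai refinement: if `|V(G)| ≤ n`, `ν(G) ≤ ν`, `2ν+2 ≤ n`,
`α(G) < n - ν` and `C(2ν+1,2) < (n-ν)ν + C(ν,2)`, then `|E(G)| < (n-ν)ν + C(ν,2)`. -/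
theorem edges_lt_of_indepNum_lt (n ν : ℕ) (hn : 0 < n) (hν : 0 < ν)
    {V : Type*} [Fintype V] (G : SimpleGraph V)
    (hcard : Fintype.card V ≤ n) (hmat : matNum G ≤ ν) (hn2 : 2 * ν + 2 ≤ n)
    (hind : indNum G < n - ν)
    (hlt : (2 * ν + 1).choose 2 < (n - ν) * ν + ν.choose 2) :
    edgeCount G < (n - ν) * ν + ν.choose 2 :=
  edges_lt_of_indepNum_lt_general n ν G hcard hmat hind hlt
end

section
/- Let Δ ≥ 2 be an integer and let G be a finite simple graph with no isolated vertices such that the maximum degree of G equals Δ, the matching number of G equals ⌈Δ/2⌉, and the number of edges of G equals Δ·⌈Δ/2⌉ + ⌊Δ/2⌋. Then G is connected. -/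
/-!
If `G` were disconnected, splitting it along a component gives two parts with matching numbers
`a, b ≥ 1` and `a + b ≤ ⌈Δ/2⌉`, so `2a + 1 ≤ Δ` and `2b + 1 ≤ Δ`. In this range a graph of maximum
degree at most `D` and matching number `ν` with `2ν + 1 ≤ D` has at most `Dν` edges, so `G` would
have at most `Δ⌈Δ/2⌉ < Δ⌈Δ/2⌉ + ⌊Δ/2⌋` edges.

The edge bound goes by induction on `ν`: either some vertex lies in every maximum matching and
can be deleted, or the support is disconnected and splits, or every vertex is missed by some
maximum matching and the support is connected; then Gallai's lemma bounds the support by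
`2ν + 1` vertices, hence by `ν(2ν + 1) ≤ Dν` edges.
-/

open SimpleGraph

section

variable {V : Type*} {G H : SimpleGraph V} {m m' : Finset (Sym2 V)} {e : Sym2 V} {u v x y : V}

def covered (m : Finset (Sym2 V)) : Set V := {v | ∃ e ∈ m, v ∈ e}

@[simp] lemma mem_covered : v ∈ covered m ↔ ∃ e ∈ m, v ∈ e := Iff.rfl

lemma mem_covered_of_mem (he : e ∈ m) (hv : v ∈ e) : v ∈ covered m := ⟨e, he, hv⟩

lemma covered_mono (h : m ⊆ m') : covered m ⊆ covered m' :=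
  fun _ ⟨e, he, hv⟩ => ⟨e, h he, hv⟩

lemma mem_covered_insert [DecidableEq V] : v ∈ covered (insert e m) ↔ v ∈ e ∨ v ∈ covered m := by
  simp [or_and_right, exists_or]

lemma mem_covered_erase [DecidableEq V] (hv : v ∈ covered m) (hve : v ∉ e) :
    v ∈ covered (m.erase e) := by
  obtain ⟨f, hf, hvf⟩ := hv
  exact ⟨f, Finset.mem_erase.mpr ⟨by rintro rfl; exact hve hvf, hf⟩, hvf⟩

lemma ncard_covered_le [Finite V] (m : Finset (Sym2 V)) : (covered m).ncard ≤ 2 * m.card := by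
  classical
  induction m using Finset.induction_on with
  | empty => simp [covered]
  | @insert e m he ih =>
    induction e with
    | _ a b =>
      have hcov : covered (insert s(a, b) m) = {a, b} ∪ covered m := by
        ext; simp
      calc (covered (insert s(a, b) m)).ncard ≤ ({a, b} : Set V).ncard + (covered m).ncard := by
            rw [hcov]; exact Set.ncard_union_le _ _
        _ ≤ 2 + 2 * m.card := by gcongr; exact (Set.ncard_insert_le a {b}).trans (by simp)
        _ = 2 * (insert s(a, b) m).card := by rw [Finset.card_insert_of_notMem he]; ring

namespace IsMatchingFinset

lemma subset (hm : IsMatchingFinset G m) (h : m' ⊆ m) : IsMatchingFinset G m' :=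
  ⟨fun _ he => hm.1 (h he), fun e he f hf => hm.2 e (h he) f (h hf)⟩

lemma mono_s12 (hm : IsMatchingFinset G m) (h : G ≤ H) : IsMatchingFinset H m :=
  ⟨hm.1.trans (edgeSet_mono h), hm.2⟩

lemma adj (hm : IsMatchingFinset G m) (h : s(x, y) ∈ m) : G.Adj x y := hm.1 h

lemma eq_of_mem_of_mem {f : Sym2 V} (hm : IsMatchingFinset G m) (he : e ∈ m) (hf : f ∈ m)
    (hve : v ∈ e) (hvf : v ∈ f) : e = f := by
  by_contra hef
  exact hm.2 e he f hf hef v ⟨hve, hvf⟩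

lemma notMem_covered_erase [DecidableEq V] (hm : IsMatchingFinset G m) (he : e ∈ m)
    (hv : v ∈ e) : v ∉ covered (m.erase e) := by
  rintro ⟨f, hf, hvf⟩
  exact Finset.ne_of_mem_erase hf (hm.eq_of_mem_of_mem (Finset.mem_of_mem_erase hf) he hvf hv)

lemma insert_edge_s12 [DecidableEq V] (hm : IsMatchingFinset G m) (hxy : G.Adj x y)
    (hx : x ∉ covered m) (hy : y ∉ covered m) : IsMatchingFinset G (insert s(x, y) m) := by
  have hfresh : ∀ v ∈ s(x, y), v ∉ covered m := by
    intro v hv; rcases Sym2.mem_iff.mp hv with rfl | rfl <;> assumption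
  refine ⟨?_, ?_⟩
  · intro f hf
    rcases Finset.mem_insert.mp hf with rfl | hf
    · exact hxy
    · exact hm.1 hf
  · intro f hf g hg hfg v ⟨hvf, hvg⟩
    rcases Finset.mem_insert.mp hf with rfl | hf <;> rcases Finset.mem_insert.mp hg with rfl | hg
    · exact hfg rfl
    · exact hfresh v hvf (mem_covered_of_mem hg hvg)
    · exact hfresh v hvg (mem_covered_of_mem hf hvf)
    · exact hm.2 f hf g hg hfg v ⟨hvf, hvg⟩

lemma exchange [DecidableEq V] (hm : IsMatchingFinset G m) (hxy : s(x, y) ∈ m)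
    (hu : u ∉ covered m) (hux : G.Adj u x) :
    IsMatchingFinset G (insert s(u, x) (m.erase s(x, y))) ∧
      (insert s(u, x) (m.erase s(x, y))).card = m.card ∧
      covered (insert s(u, x) (m.erase s(x, y))) ⊆ insert u (covered m) \ {y} := by
  have hy : y ∈ covered m := mem_covered_of_mem hxy (Sym2.mem_mk_right x y)
  have hx : x ∈ covered m := mem_covered_of_mem hxy (Sym2.mem_mk_left x y)
  have hxy' : x ≠ y := (hm.adj hxy).ne
  have hu' : u ∉ covered (m.erase s(x, y)) := fun h => hu (covered_mono (m.erase_subset _) h)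
  refine ⟨(hm.subset (m.erase_subset _)).insert_edge_s12 hux hu'
      (hm.notMem_covered_erase hxy (Sym2.mem_mk_left x y)), ?_, ?_⟩
  · rw [Finset.card_insert_of_notMem fun h => hu' (mem_covered_of_mem h (Sym2.mem_mk_left u x)),
      Finset.card_erase_add_one hxy]
  · intro v hv
    rcases mem_covered_insert.mp hv with hv | hv
    · rcases Sym2.mem_iff.mp hv with rfl | rfl
      · exact ⟨Set.mem_insert v _, by rintro rfl; exact hu hy⟩
      · exact ⟨Set.mem_insert_of_mem u hx, hxy'⟩
    · exact ⟨Set.mem_insert_of_mem u (covered_mono (m.erase_subset _) hv),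
        fun h => hm.notMem_covered_erase hxy (Sym2.mem_mk_right x y)
          (Set.mem_singleton_iff.mp h ▸ hv)⟩

end IsMatchingFinset

lemma bddAbove_matchingCards [Finite V] (G : SimpleGraph V) :
    BddAbove {n | ∃ m : Finset (Sym2 V), IsMatchingFinset G m ∧ m.card = n} := by
  have := Fintype.ofFinite V
  exact ⟨Fintype.card (Sym2 V), by rintro n ⟨m, -, rfl⟩; exact m.card_le_univ⟩

lemma card_le_matNum_s12 [Finite V] (hm : IsMatchingFinset G m) : m.card ≤ matNum G :=
  le_csSup (bddAbove_matchingCards G) ⟨m, hm, rfl⟩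

def IsMaximumMatching (G : SimpleGraph V) (m : Finset (Sym2 V)) : Prop :=
  IsMatchingFinset G m ∧ m.card = matNum G

lemma exists_isMaximumMatching [Finite V] (G : SimpleGraph V) : ∃ m, IsMaximumMatching G m :=
  Nat.sSup_mem (s := {n | ∃ m : Finset (Sym2 V), IsMatchingFinset G m ∧ m.card = n})
    ⟨0, ∅, by simp [IsMatchingFinset]⟩ (bddAbove_matchingCards G)

lemma matNum_mono [Finite V] (h : G ≤ H) : matNum G ≤ matNum H := by
  obtain ⟨m, hm, hcard⟩ := exists_isMaximumMatching G
  exact hcard ▸ card_le_matNum_s12 (hm.mono_s12 h)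

lemma matNum_pos_of_adj [Finite V] (h : G.Adj u v) : 0 < matNum G :=
  card_le_matNum_s12 (m := {s(u, v)}) ⟨by simpa using h, by simp⟩

lemma IsMaximumMatching.not_adj [Finite V] (hm : IsMaximumMatching G m) (hu : u ∉ covered m)
    (hv : v ∉ covered m) : ¬G.Adj u v := by
  classical
  intro huv
  have := card_le_matNum_s12 (hm.1.insert_edge_s12 huv hu hv)
  rw [Finset.card_insert_of_notMem fun h => hu (mem_covered_of_mem h (Sym2.mem_mk_left u v)),
    hm.2] at this
  omega

lemma exists_isMaximumMatching_notMem_covered [Finite V]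
    (h : matNum G ≤ matNum (G.deleteIncidenceSet v)) :
    ∃ m, IsMaximumMatching G m ∧ v ∉ covered m := by
  obtain ⟨m, hm, hcard⟩ := exists_isMaximumMatching (G.deleteIncidenceSet v)
  refine ⟨m, ⟨hm.mono_s12 (G.deleteIncidenceSet_le v),
    hcard.trans (le_antisymm (matNum_mono (G.deleteIncidenceSet_le v)) h)⟩, ?_⟩
  rintro ⟨e, he, hve⟩
  obtain ⟨w, rfl⟩ := Sym2.mem_iff_exists.mp hve
  exact (deleteIncidenceSet_adj.mp (hm.adj he)).2.1 rfl

/-- `z` is the far end of a path `P` that alternates between `M'` and `M`, starts at `u` with an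
edge of `M'` and ends at `z` with an edge `yz` of `M`. The matchings `M ∆ P` and `M' ∆ P` are
recorded only through their sizes and the vertices they cover. -/
def AlternatingPathEnd (G : SimpleGraph V) (M M' : Finset (Sym2 V)) (u z : V) : Prop :=
  (∃ y, s(y, z) ∈ M ∧ y ∈ covered M') ∧ z ∉ covered M' ∧
    (∃ N, IsMatchingFinset G N ∧ N.card = M.card ∧ covered N ⊆ insert u (covered M) \ {z}) ∧
    (∃ N', IsMatchingFinset G N' ∧ N'.card = M'.card ∧ covered N' ⊆ insert z (covered M') \ {u})

section AlternatingPath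

variable [DecidableEq V] {M M' : Finset (Sym2 V)} {z : V}

lemma alternatingPathEnd_of_notMem_covered (hM : IsMatchingFinset G M)
    (hM' : IsMatchingFinset G M') (hu : u ∉ covered M) (hux : s(u, x) ∈ M') (hxy : s(x, y) ∈ M)
    (hy : y ∉ covered M') : AlternatingPathEnd G M M' u y := by
  have hxu : s(x, u) ∈ M' := Sym2.eq_swap ▸ hux
  exact ⟨⟨x, hxy, mem_covered_of_mem hux (Sym2.mem_mk_right u x)⟩, hy,
    ⟨_, hM.exchange hxy hu (hM'.adj hux)⟩, ⟨_, hM'.exchange hxu hy (hM.adj hxy).symm⟩⟩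

lemma AlternatingPathEnd.extend (hM : IsMatchingFinset G M) (hM' : IsMatchingFinset G M')
    (hu : u ∉ covered M) (hux : s(u, x) ∈ M') (hxy : s(x, y) ∈ M) (hy : y ∈ covered M')
    (h : AlternatingPathEnd G (insert s(u, x) (M.erase s(x, y))) (M'.erase s(u, x)) y z) :
    AlternatingPathEnd G M M' u z := by
  obtain ⟨⟨w, hwz, hw⟩, hz, ⟨N, hN, hNcard, hNcov⟩, ⟨N', hN', hN'card, hN'cov⟩⟩ := h
  obtain ⟨-, hexcard, hexcov⟩ := hM.exchange hxy hu (hM'.adj hux)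
  have hu'' : u ∉ covered (M'.erase s(u, x)) := hM'.notMem_covered_erase hux (Sym2.mem_mk_left u x)
  have hx'' : x ∉ covered (M'.erase s(u, x)) := hM'.notMem_covered_erase hux (Sym2.mem_mk_right u x)
  have hwzM : s(w, z) ∈ M.erase s(x, y) := by
    refine (Finset.mem_insert.mp hwz).resolve_left fun h => ?_
    rcases Sym2.mem_iff.mp (h ▸ Sym2.mem_mk_left w z) with rfl | rfl
    exacts [hu'' hw, hx'' hw]
  have hzM : z ∈ covered (M.erase s(x, y)) := mem_covered_of_mem hwzM (Sym2.mem_mk_right w z)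
  have hzu : z ≠ u := fun h => hu (covered_mono (M.erase_subset _) (h ▸ hzM))
  have hzx : z ≠ x := fun h => hM.notMem_covered_erase hxy (Sym2.mem_mk_left x y) (h ▸ hzM)
  have hyu : y ≠ u := fun h => hu (h ▸ mem_covered_of_mem hxy (Sym2.mem_mk_right x y))
  refine ⟨⟨w, Finset.mem_of_mem_erase hwzM, covered_mono (M'.erase_subset _) hw⟩, ?_, ?_, ?_⟩
  · intro hz'
    refine hz (mem_covered_erase hz' fun h => ?_)
    rcases Sym2.mem_iff.mp h with rfl | rfl
    exacts [hzu rfl, hzx rfl]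
  · refine ⟨N, hN, hNcard.trans hexcard, fun v hv => ⟨?_, (hNcov hv).2⟩⟩
    rcases (hNcov hv).1 with rfl | hv
    · exact Set.mem_insert_of_mem u (mem_covered_of_mem hxy (Sym2.mem_mk_right x v))
    · exact (hexcov hv).1
  · have hxN' : x ∉ covered N' := fun h => by
      rcases (hN'cov h).1 with rfl | h
      exacts [hzx rfl, hx'' h]
    have hyN' : y ∉ covered N' := fun h => (hN'cov h).2 rfl
    refine ⟨insert s(x, y) N', hN'.insert_edge_s12 (hM.adj hxy) hxN' hyN', ?_, fun v hv => ?_⟩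
    · rw [Finset.card_insert_of_notMem fun h => hyN' (mem_covered_of_mem h (Sym2.mem_mk_right x y)),
        hN'card, Finset.card_erase_add_one hux]
    rcases mem_covered_insert.mp hv with hv | hv
    · rcases Sym2.mem_iff.mp hv with rfl | rfl
      · exact ⟨Set.mem_insert_of_mem z (mem_covered_of_mem hux (Sym2.mem_mk_right u v)),
          (hM'.adj hux).ne.symm⟩
      · exact ⟨Set.mem_insert_of_mem z hy, hyu⟩
    · rcases (hN'cov hv).1 with rfl | hv
      · exact ⟨Set.mem_insert v _, hzu⟩
      · exact ⟨Set.mem_insert_of_mem z (covered_mono (M'.erase_subset _) hv),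
          fun h => hu'' (Set.mem_singleton_iff.mp h ▸ hv)⟩

end AlternatingPath

lemma IsMaximumMatching.exists_alternatingPathEnd [Finite V] {M M' : Finset (Sym2 V)}
    (hM : IsMaximumMatching G M) (hM' : IsMatchingFinset G M') (hu : u ∉ covered M)
    (hu' : u ∈ covered M') : ∃ z, AlternatingPathEnd G M M' u z := by
  classical
  obtain ⟨n, hn⟩ : ∃ n, M'.card = n := ⟨_, rfl⟩
  induction n generalizing M M' u with
  | zero =>
    obtain ⟨e, he, -⟩ := hu'
    simp [Finset.card_eq_zero.mp hn] at he
  | succ n ih =>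
    obtain ⟨e, hux, hue⟩ := hu'
    obtain ⟨x, rfl⟩ := Sym2.mem_iff_exists.mp hue
    by_cases hx : x ∈ covered M
    swap
    · exact absurd (hM'.adj hux) (hM.not_adj hu hx)
    obtain ⟨f, hxy, hxf⟩ := hx
    obtain ⟨y, rfl⟩ := Sym2.mem_iff_exists.mp hxf
    by_cases hy : y ∈ covered M'
    swap
    · exact ⟨y, alternatingPathEnd_of_notMem_covered hM.1 hM' hu hux hxy hy⟩
    obtain ⟨hN, hNcard, hNcov⟩ := hM.1.exchange hxy hu (hM'.adj hux)
    have hyux : y ∉ s(u, x) := by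
      rintro hy'
      rcases Sym2.mem_iff.mp hy' with rfl | rfl
      · exact hu (mem_covered_of_mem hxy (Sym2.mem_mk_right x y))
      · exact (hM.1.adj hxy).ne rfl
    obtain ⟨z, hz⟩ := ih ⟨hN, hNcard.trans hM.2⟩ (hM'.subset (M'.erase_subset _))
      (fun h => (hNcov h).2 rfl) (mem_covered_erase hy hyux)
      (by rw [Finset.card_erase_of_mem hux, hn]; rfl)
    exact ⟨z, hz.extend hM.1 hM' hu hux hxy hy⟩

/-- Gallai's lemma. For a closest pair `u ≠ v` missed by `m`, let `w` be the neighbour of `u` on a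
shortest path and `m'` a maximum matching missing `w`; switching along the alternating path from
`u` leaves a closer pair uncovered. -/
theorem IsMaximumMatching.eq_of_reachable [Finite V]
    (hG : ∀ w, ∃ m, IsMaximumMatching G m ∧ w ∉ covered m) (hm : IsMaximumMatching G m)
    (hu : u ∉ covered m) (hv : v ∉ covered m) (huv : G.Reachable u v) : u = v := by
  obtain ⟨d, hd⟩ : ∃ d, G.dist u v = d := ⟨_, rfl⟩
  induction d using Nat.strong_induction_on generalizing m u v with
  | _ d ih =>
  by_contra hne
  obtain ⟨p, hp⟩ := huv.exists_walk_length_eq_dist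
  cases p with
  | nil => exact hne rfl
  | @cons _ w _ huw q =>
    have hw : w ∈ covered m := by_contra fun hw => hm.not_adj hu hw huw
    have hwv : w ≠ v := fun h => hv (h ▸ hw)
    have hq : 0 < q.length := Nat.pos_of_ne_zero fun h => hwv (q.eq_of_length_eq_zero h)
    rw [Walk.length_cons, hd] at hp
    have hdwv : G.dist w v < d := (dist_le q).trans_lt (by omega)
    have hduw : G.dist u w < d := (dist_le huw.toWalk).trans_lt (by simp; omega)
    obtain ⟨m', hm', hwm'⟩ := hG w
    have hum' : u ∈ covered m' :=
      by_contra fun h => huw.ne (ih _ hduw hm' h hwm' huw.reachable rfl)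
    obtain ⟨z, -, -, ⟨N, hN, hNcard, hNcov⟩, ⟨N', hN', hN'card, hN'cov⟩⟩ :=
      hm.exists_alternatingPathEnd hm'.1 hu hum'
    by_cases hzw : z = w
    · subst hzw
      refine hwv (ih _ hdwv ⟨hN, hNcard.trans hm.2⟩ (fun h => (hNcov h).2 rfl) (fun h => ?_)
        ⟨q⟩ rfl)
      rcases (hNcov h).1 with rfl | h
      exacts [hne rfl, hv h]
    · refine huw.ne (ih _ hduw ⟨hN', hN'card.trans hm'.2⟩ (fun h => (hN'cov h).2 rfl)
        (fun h => ?_) huw.reachable rfl)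
      rcases (hN'cov h).1 with rfl | h
      exacts [hzw rfl, hwm' h]

theorem ncard_support_le_of_forall_exists_isMaximumMatching [Finite V]
    (hconn : ∀ u ∈ G.support, ∀ v ∈ G.support, G.Reachable u v)
    (hG : ∀ w, ∃ m, IsMaximumMatching G m ∧ w ∉ covered m) :
    G.support.ncard ≤ 2 * matNum G + 1 := by
  obtain ⟨m, hm⟩ := exists_isMaximumMatching G
  have hmiss : (G.support \ covered m).Subsingleton := fun u hu v hv =>
    hm.eq_of_reachable hG hu.2 hv.2 (hconn u hu.1 v hv.1)
  calc G.support.ncard ≤ (G.support \ covered m).ncard + (covered m).ncard :=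
        Set.ncard_le_ncard_sdiff_add_ncard _ _
    _ ≤ 1 + 2 * m.card :=
        add_le_add (Set.ncard_le_one_iff_subsingleton.mpr hmiss) (ncard_covered_le m)
    _ = 2 * matNum G + 1 := by rw [hm.2]; ring

lemma edgeCount_le_choose_two [Finite V] (G : SimpleGraph V) :
    edgeCount G ≤ G.support.ncard.choose 2 := by
  classical
  have := Fintype.ofFinite V
  have hsub : G.edgeSet ⊆ ↑(G.support.toFinset.offDiag.image Sym2.mk.uncurry) := by
    intro e he
    induction e with
    | _ a b =>
      exact Finset.mem_image.mpr ⟨(a, b), by simpa using ⟨⟨b, he⟩, ⟨a, he.symm⟩, he.ne⟩, rfl⟩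
  calc edgeCount G ≤ (G.support.toFinset.offDiag.image Sym2.mk.uncurry).card :=
        (Set.ncard_le_ncard hsub).trans_eq (Set.ncard_coe_finset _)
    _ = G.support.ncard.choose 2 := by
        rw [Sym2.card_image_offDiag, Set.ncard_eq_toFinset_card']

lemma edgeCount_deleteIncidenceSet_add [Finite V] (G : SimpleGraph V) (v : V) :
    edgeCount (G.deleteIncidenceSet v) + (G.neighborSet v).ncard = edgeCount G := by
  classical
  have hinc : (G.incidenceSet v).ncard = (G.neighborSet v).ncard := by
    rw [← Nat.card_coe_set_eq, ← Nat.card_coe_set_eq]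
    exact Nat.card_congr (G.incidenceSetEquivNeighborSet v)
  rw [edgeCount, edgeCount, edgeSet_deleteIncidenceSet, ← hinc,
    Set.ncard_sdiff_add_ncard_of_subset (G.incidenceSet_subset v)]

lemma ncard_neighborSet_le_of_le [Finite V] (h : G ≤ H) (v : V) :
    (G.neighborSet v).ncard ≤ (H.neighborSet v).ncard :=
  Set.ncard_le_ncard (neighborSet_mono h v)

lemma ncard_neighborSet_le_maxDeg [Finite V] (G : SimpleGraph V) (v : V) :
    (G.neighborSet v).ncard ≤ maxDeg G :=
  le_ciSup (f := fun v => (G.neighborSet v).ncard) (Set.finite_range _).bddAbove v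

namespace SimpleGraph

def restrict (G : SimpleGraph V) (A : Set V) : SimpleGraph V where
  Adj x y := G.Adj x y ∧ x ∈ A ∧ y ∈ A
  symm := ⟨fun _ _ h => ⟨h.1.symm, h.2.2, h.2.1⟩⟩
  loopless := ⟨fun x h => G.loopless.irrefl x h.1⟩

variable {A : Set V}

@[simp] lemma restrict_adj : (G.restrict A).Adj x y ↔ G.Adj x y ∧ x ∈ A ∧ y ∈ A := Iff.rfl

lemma restrict_le : G.restrict A ≤ G := fun _ _ h => (restrict_adj.mp h).1

lemma mem_of_mem_edgeSet_restrict (he : e ∈ (G.restrict A).edgeSet) (hv : v ∈ e) : v ∈ A := by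
  obtain ⟨w, rfl⟩ := Sym2.mem_iff_exists.mp hv
  exact (restrict_adj.mp he).2.1

lemma edgeCount_restrict_add_restrict_compl [Finite V]
    (hA : ∀ x y, G.Adj x y → x ∈ A → y ∈ A) :
    edgeCount (G.restrict A) + edgeCount (G.restrict Aᶜ) = edgeCount G := by
  have hunion : (G.restrict A).edgeSet ∪ (G.restrict Aᶜ).edgeSet = G.edgeSet := by
    refine Set.union_subset (edgeSet_mono restrict_le) (edgeSet_mono restrict_le) |>.antisymm ?_
    intro e he
    induction e with
    | _ a b =>
      by_cases ha : a ∈ A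
      · exact Or.inl (restrict_adj.mpr ⟨he, ha, hA a b he ha⟩)
      · exact Or.inr (restrict_adj.mpr ⟨he, ha, fun hb => ha (hA b a he.symm hb)⟩)
  have hdisj : Disjoint (G.restrict A).edgeSet (G.restrict Aᶜ).edgeSet :=
    Set.disjoint_left.mpr fun e he he' => by
      induction e with
      | _ a b => exact (restrict_adj.mp he').2.1 (restrict_adj.mp he).2.1
  rw [edgeCount, edgeCount, edgeCount, ← hunion, Set.ncard_union_eq hdisj]

lemma matNum_restrict_add_restrict_compl_le [Finite V] (G : SimpleGraph V) (A : Set V) :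
    matNum (G.restrict A) + matNum (G.restrict Aᶜ) ≤ matNum G := by
  classical
  obtain ⟨m, hm, hmcard⟩ := exists_isMaximumMatching (G.restrict A)
  obtain ⟨m', hm', hm'card⟩ := exists_isMaximumMatching (G.restrict Aᶜ)
  have hsep : ∀ e ∈ m, ∀ f ∈ m', ∀ v, v ∈ e → v ∉ f := fun e he f hf v hve hvf =>
    mem_of_mem_edgeSet_restrict (hm'.1 hf) hvf (mem_of_mem_edgeSet_restrict (hm.1 he) hve)
  have hdisj : Disjoint m m' := Finset.disjoint_left.mpr fun e he he' => by
    induction e with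
    | _ a b => exact hsep _ he _ he' a (Sym2.mem_mk_left a b) (Sym2.mem_mk_left a b)
  have hunion : IsMatchingFinset G (m ∪ m') := by
    refine ⟨by simpa using ⟨(hm.mono_s12 restrict_le).1, (hm'.mono_s12 restrict_le).1⟩, ?_⟩
    intro e he f hf hef v ⟨hve, hvf⟩
    rcases Finset.mem_union.mp he with he | he <;> rcases Finset.mem_union.mp hf with hf | hf
    · exact hm.2 e he f hf hef v ⟨hve, hvf⟩
    · exact hsep e he f hf v hve hvf
    · exact hsep f hf e he v hvf hve
    · exact hm'.2 e he f hf hef v ⟨hve, hvf⟩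
  simpa [Finset.card_union_of_disjoint hdisj, hmcard, hm'card] using card_le_matNum_s12 hunion

end SimpleGraph

lemma edgeCount_le_of_not_reachable [Finite V] {D : ℕ} (hu : u ∈ G.support)
    (hv : v ∈ G.support) (huv : ¬G.Reachable u v)
    (hbound : ∀ A : Set V, matNum (G.restrict A) < matNum G →
      edgeCount (G.restrict A) ≤ D * matNum (G.restrict A)) :
    edgeCount G ≤ D * matNum G := by
  set A := {x | G.Reachable u x}
  have hA : ∀ x y, G.Adj x y → x ∈ A → y ∈ A := fun _ _ hxy hx => hx.trans hxy.reachable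
  obtain ⟨u', hu'⟩ := hu
  obtain ⟨v', hv'⟩ := hv
  have hpos : 0 < matNum (G.restrict A) :=
    matNum_pos_of_adj (restrict_adj.mpr ⟨hu', Reachable.rfl, hu'.reachable⟩)
  have hpos' : 0 < matNum (G.restrict Aᶜ) :=
    matNum_pos_of_adj (restrict_adj.mpr
      ⟨hv', huv, fun h => huv (h.trans hv'.symm.reachable)⟩)
  have hsum := G.matNum_restrict_add_restrict_compl_le A
  calc edgeCount G = edgeCount (G.restrict A) + edgeCount (G.restrict Aᶜ) :=
        (edgeCount_restrict_add_restrict_compl hA).symm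
    _ ≤ D * matNum (G.restrict A) + D * matNum (G.restrict Aᶜ) :=
        add_le_add (hbound A (by omega)) (hbound Aᶜ (by omega))
    _ ≤ D * matNum G := by rw [← mul_add]; gcongr

theorem edgeCount_le_mul_matNum [Finite V] {D : ℕ} (hD : 2 * matNum G + 1 ≤ D)
    (hdeg : ∀ v, (G.neighborSet v).ncard ≤ D) : edgeCount G ≤ D * matNum G := by
  obtain ⟨n, hn⟩ : ∃ n, matNum G = n := ⟨_, rfl⟩
  induction n using Nat.strong_induction_on generalizing G with
  | _ n ih =>
  have hsub : ∀ H ≤ G, matNum H < matNum G → edgeCount H ≤ D * matNum H := fun H hH hlt =>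
    ih _ (hn ▸ hlt) (by omega) (fun v => (ncard_neighborSet_le_of_le hH v).trans (hdeg v)) rfl
  by_cases hess : ∃ v, matNum (G.deleteIncidenceSet v) < matNum G
  · obtain ⟨v, hv⟩ := hess
    calc edgeCount G = edgeCount (G.deleteIncidenceSet v) + (G.neighborSet v).ncard :=
          (edgeCount_deleteIncidenceSet_add G v).symm
      _ ≤ D * matNum (G.deleteIncidenceSet v) + D :=
          add_le_add (hsub _ (G.deleteIncidenceSet_le v) hv) (hdeg v)
      _ ≤ D * matNum G := by rw [← mul_add_one]; gcongr; omega
  push Not at hess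
  by_cases hconn : ∀ u ∈ G.support, ∀ v ∈ G.support, G.Reachable u v
  · have hsupp := ncard_support_le_of_forall_exists_isMaximumMatching hconn
      fun v => exists_isMaximumMatching_notMem_covered (hess v)
    calc edgeCount G ≤ G.support.ncard.choose 2 := edgeCount_le_choose_two G
      _ ≤ (2 * matNum G + 1).choose 2 := Nat.choose_le_choose 2 hsupp
      _ = matNum G * (2 * matNum G + 1) := by
          rw [Nat.choose_two_right, Nat.add_sub_cancel, mul_comm, mul_assoc,
            Nat.mul_div_cancel_left _ two_pos]
      _ ≤ D * matNum G := by rw [mul_comm]; gcongr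
  · push Not at hconn
    obtain ⟨u, hu, v, hv, huv⟩ := hconn
    exact edgeCount_le_of_not_reachable hu hv huv fun A hA => hsub _ restrict_le hA

end

/-- If `Δ ≥ 2`, `G` has no isolated vertices, `Δ(G) = Δ`,
`ν(G) = ⌈Δ/2⌉` and `|E(G)| = Δ⌈Δ/2⌉ + ⌊Δ/2⌋`, then `G` is connected. -/
theorem critical_extremal_connected (Δ : ℕ) (hΔ : 2 ≤ Δ)
    {V : Type*} [Fintype V] (G : SimpleGraph V)
    (hiso : ∀ v, ∃ u, G.Adj v u)
    (hdeg : maxDeg G = Δ) (hmat : matNum G = (Δ + 1) / 2)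
    (hE : edgeCount G = Δ * ((Δ + 1) / 2) + Δ / 2) :
    G.Connected := by
  have hdegΔ : ∀ v, (G.neighborSet v).ncard ≤ Δ := fun v => hdeg ▸ ncard_neighborSet_le_maxDeg G v
  have hpre : G.Preconnected := fun u v => by_contra fun huv => by
    have hle : edgeCount G ≤ Δ * matNum G :=
      edgeCount_le_of_not_reachable (G.mem_support.mpr (hiso u)) (G.mem_support.mpr (hiso v)) huv
        fun A hA => edgeCount_le_mul_matNum (by omega)
          fun w => (ncard_neighborSet_le_of_le restrict_le w).trans (hdegΔ w)
    rw [hE, hmat] at hle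
    omega
  have : Nonempty V := not_isEmpty_iff.mp fun _ => by
    have : edgeCount G = 0 := by
      rw [edgeCount, Set.eq_empty_of_isEmpty G.edgeSet, Set.ncard_empty]
    omega
  exact ⟨hpre⟩
end
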